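/- Let (aᵢ)_{i≥1} be a nondecreasing sequence of positive reals with Σᵢ 1/aᵢ² < ∞, define μ(θ) = Σᵢ 1/(aᵢ²+2θ) and I(θ) = ½·Σᵢ log(1+2θ/aᵢ²) − θ·μ(θ) for θ > 0, let μ⁻¹ be the inverse of μ, and set ρ(s) = 1/μ⁻¹(s). Then for every x ∈ ℝ, exp( I(μ⁻¹(s)) − I(μ⁻¹(s + x·ρ(s))) − x ) → 1 as s → 0⁺. -/

import Mathlib

/-!
Put `θ₁ = μ⁻¹ s` and `θ₂ = μ⁻¹ (s + x / θ₁)`, so that `θ₁ (μ θ₂ - μ θ₁) = x`. Since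
`I' = -θ μ'` with `μ' ≤ 0`, for `α ≤ β` the increment `I β - I α` lies between `α (μ α - μ β)`
and `β (μ α - μ β)`; hence `|I θ₁ - I θ₂ - x| ≤ |x| |θ₂ / θ₁ - 1|`. It remains to see
`θ₂ / θ₁ → 1`. For `0 < b < c` every summand of `θ (μ (b θ) - μ (c θ))` tends to
`1 / (2b) - 1 / (2c) > 0`, so this quantity tends to `∞`: a change of `μ` of order `1 / θ₁`
can only move `θ₁` by a factor close to `1`.
-/

open Filter Set Real Topology

lemma sub_mem_Icc_of_hasDerivAt_neg_mul {f g g' : ℝ → ℝ} {α β : ℝ} (hαβ : α ≤ β)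
    (hf : ∀ θ ∈ Icc α β, HasDerivAt f (-θ * g' θ) θ)
    (hg : ∀ θ ∈ Icc α β, HasDerivAt g (g' θ) θ) (hg' : ∀ θ ∈ Icc α β, g' θ ≤ 0) :
    f β - f α ∈ Icc (α * (g α - g β)) (β * (g α - g β)) := by
  have hderiv (c : ℝ) : ∀ θ ∈ Icc α β,
      HasDerivAt (fun θ => f θ + c * g θ) ((c - θ) * g' θ) θ := fun θ hθ =>
    ((hf θ hθ).add ((hg θ hθ).const_mul c)).congr_deriv (by ring)
  have hcont (c : ℝ) : ContinuousOn (fun θ => f θ + c * g θ) (Icc α β) := fun θ hθ =>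
    (hderiv c θ hθ).continuousAt.continuousWithinAt
  have hwithin (c : ℝ) : ∀ θ ∈ interior (Icc α β), HasDerivWithinAt (fun θ => f θ + c * g θ)
      ((c - θ) * g' θ) (interior (Icc α β)) θ := fun θ hθ =>
    (hderiv c θ (interior_subset hθ)).hasDerivWithinAt
  have hmono := monotoneOn_of_hasDerivWithinAt_nonneg (convex_Icc α β) (hcont α) (hwithin α)
    fun θ hθ => by
      rw [interior_Icc] at hθ
      exact mul_nonneg_of_nonpos_of_nonpos (by linarith [hθ.1]) (hg' θ (Ioo_subset_Icc_self hθ))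
  have hanti := antitoneOn_of_hasDerivWithinAt_nonpos (convex_Icc α β) (hcont β) (hwithin β)
    fun θ hθ => by
      rw [interior_Icc] at hθ
      exact mul_nonpos_of_nonneg_of_nonpos (by linarith [hθ.2]) (hg' θ (Ioo_subset_Icc_self hθ))
  have h₁ := hmono (left_mem_Icc.2 hαβ) (right_mem_Icc.2 hαβ) hαβ
  have h₂ := hanti (left_mem_Icc.2 hαβ) (right_mem_Icc.2 hαβ) hαβ
  constructor <;> linarith

noncomputable section

def tiltedMean (A : ℕ → ℝ) (θ : ℝ) : ℝ := ∑' i, 1 / (A i + 2 * θ)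

def rateFunction (A : ℕ → ℝ) (θ : ℝ) : ℝ :=
  (1 / 2) * (∑' i, Real.log (1 + 2 * θ / A i)) - θ * tiltedMean A θ

def rateTerm (A θ : ℝ) : ℝ := (1 / 2) * Real.log (1 + 2 * θ / A) - θ / (A + 2 * θ)

end

lemma hasDerivAt_add_two_mul (A θ : ℝ) : HasDerivAt (fun θ => A + 2 * θ) 2 θ := by
  simpa using ((hasDerivAt_id θ).const_mul 2).const_add A

lemma hasDerivAt_one_div_add_two_mul {A θ : ℝ} (hθ : A + 2 * θ ≠ 0) :
    HasDerivAt (fun θ => 1 / (A + 2 * θ)) (-2 / (A + 2 * θ) ^ 2) θ :=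
  ((hasDerivAt_const θ (1 : ℝ)).div (hasDerivAt_add_two_mul A θ) hθ).congr_deriv (by ring)

lemma hasDerivAt_rateTerm {A θ : ℝ} (hA : A ≠ 0) (hθ : A + 2 * θ ≠ 0) :
    HasDerivAt (rateTerm A) (-θ * (-2 / (A + 2 * θ) ^ 2)) θ := by
  have hlog : 1 + 2 * θ / A ≠ 0 := by
    rwa [one_add_div hA, div_ne_zero_iff, and_iff_left hA]
  have harg : HasDerivAt (fun θ => 1 + 2 * θ / A) (2 / A) θ := by
    simpa using (((hasDerivAt_id' θ).const_mul 2).div_const A).const_add 1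
  refine (((harg.log hlog).const_mul (1 / 2)).sub
    ((hasDerivAt_id' θ).div (hasDerivAt_add_two_mul A θ) hθ)).congr_deriv ?_
  field_simp
  ring

lemma rateTerm_sub_mem_Icc {A α β : ℝ} (hA : 0 < A) (hα : 0 ≤ α) (hαβ : α ≤ β) :
    rateTerm A β - rateTerm A α ∈
      Icc (α * (1 / (A + 2 * α) - 1 / (A + 2 * β))) (β * (1 / (A + 2 * α) - 1 / (A + 2 * β))) := by
  have hpos : ∀ θ ∈ Icc α β, 0 < A + 2 * θ := fun θ hθ => by linarith [hθ.1]
  exact sub_mem_Icc_of_hasDerivAt_neg_mul (g := fun θ => 1 / (A + 2 * θ)) hαβ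
    (fun θ hθ => hasDerivAt_rateTerm hA.ne' (hpos θ hθ).ne')
    (fun θ hθ => hasDerivAt_one_div_add_two_mul (hpos θ hθ).ne')
    (fun θ _ => div_nonpos_of_nonpos_of_nonneg (by norm_num) (sq_nonneg _))

lemma tendsto_mul_one_div_sub_one_div (A : ℝ) {b c : ℝ} (hb : b ≠ 0) (hc : c ≠ 0) :
    Tendsto (fun θ : ℝ => θ * (1 / (A + 2 * (b * θ)) - 1 / (A + 2 * (c * θ)))) atTop
      (𝓝 (1 / (2 * b) - 1 / (2 * c))) := by
  have hAθ : Tendsto (fun θ : ℝ => A / θ) atTop (𝓝 0) := tendsto_const_nhds.div_atTop tendsto_id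
  have hlim : Tendsto (fun θ : ℝ => 1 / (A / θ + 2 * b) - 1 / (A / θ + 2 * c)) atTop
      (𝓝 (1 / (0 + 2 * b) - 1 / (0 + 2 * c))) :=
    ((tendsto_const_nhds.div (hAθ.add_const _) (by simpa using hb)).sub
      (tendsto_const_nhds.div (hAθ.add_const _) (by simpa using hc)))
  simp only [zero_add] at hlim
  refine hlim.congr' ?_
  filter_upwards [eventually_ne_atTop 0] with θ hθ
  have hscale (k : ℝ) : A / θ + 2 * k = (A + 2 * (k * θ)) / θ := by field_simp
  rw [hscale, hscale, one_div_div, one_div_div]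
  ring

lemma tendsto_tsum_atTop_of_tendsto {α : Type*} {l : Filter α} {f : ℕ → α → ℝ} {L : ℝ}
    (hL : 0 < L) (hf : ∀ i, Tendsto (f i) l (𝓝 L)) (hnonneg : ∀ᶠ t in l, ∀ i, 0 ≤ f i t)
    (hsum : ∀ᶠ t in l, Summable fun i => f i t) : Tendsto (fun t => ∑' i, f i t) l atTop := by
  refine tendsto_atTop.2 fun M => ?_
  obtain ⟨N, hN⟩ := exists_nat_gt (M / L)
  have hpartial : Tendsto (fun t => ∑ i ∈ Finset.range N, f i t) l (𝓝 (N * L)) := by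
    simpa using tendsto_finsetSum (Finset.range N) fun i _ => hf i
  filter_upwards [hpartial.eventually (eventually_gt_nhds ((div_lt_iff₀ hL).1 hN)), hnonneg,
    hsum] with t hM hnonneg hsum
  exact hM.le.trans (hsum.sum_le_tsum _ fun i _ => hnonneg i)

section Series

variable {A : ℕ → ℝ} (hA : ∀ i, 0 < A i) (hsum : Summable fun i => 1 / A i)
include hA hsum

lemma summable_one_div_add_two_mul {θ : ℝ} (hθ : 0 ≤ θ) :
    Summable fun i => 1 / (A i + 2 * θ) :=
  hsum.of_nonneg_of_le (fun i => by have := hA i; positivity)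
    fun i => one_div_le_one_div_of_le (hA i) (by linarith)

lemma summable_log_one_add_two_mul_div {θ : ℝ} (hθ : 0 ≤ θ) :
    Summable fun i => Real.log (1 + 2 * θ / A i) := by
  refine (hsum.mul_left (2 * θ)).of_nonneg_of_le (fun i => ?_) fun i => ?_
  · have := hA i
    exact Real.log_nonneg (by simpa using (by positivity : 0 ≤ 2 * θ / A i))
  · have := hA i
    rw [mul_one_div]
    linarith [Real.log_le_sub_one_of_pos (by positivity : 0 < 1 + 2 * θ / A i)]

lemma tiltedMean_pos {θ : ℝ} (hθ : 0 ≤ θ) : 0 < tiltedMean A θ :=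
  (summable_one_div_add_two_mul hA hsum hθ).tsum_pos (fun i => by have := hA i; positivity) 0
    (by have := hA 0; positivity)

lemma antitoneOn_tiltedMean : AntitoneOn (tiltedMean A) (Ici 0) := fun α hα β hβ hαβ =>
  (summable_one_div_add_two_mul hA hsum hβ).tsum_le_tsum
    (fun i => one_div_le_one_div_of_le (by have := hA i; linarith [mem_Ici.1 hα])
      (by linarith))
    (summable_one_div_add_two_mul hA hsum hα)

lemma rateFunction_eq_tsum {θ : ℝ} (hθ : 0 ≤ θ) :
    rateFunction A θ = ∑' i, rateTerm (A i) θ := by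
  rw [rateFunction, tiltedMean, ← tsum_mul_left, ← tsum_mul_left,
    ← ((summable_log_one_add_two_mul_div hA hsum hθ).mul_left _).tsum_sub
      ((summable_one_div_add_two_mul hA hsum hθ).mul_left _)]
  simp only [rateTerm, mul_one_div]

lemma summable_rateTerm {θ : ℝ} (hθ : 0 ≤ θ) : Summable fun i => rateTerm (A i) θ :=
  (((summable_log_one_add_two_mul_div hA hsum hθ).mul_left (1 / 2)).sub
    ((summable_one_div_add_two_mul hA hsum hθ).mul_left θ)).congr fun i => by
      simp only [rateTerm, mul_one_div]

lemma rateFunction_sub_mem_Icc {α β : ℝ} (hα : 0 ≤ α) (hαβ : α ≤ β) :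
    rateFunction A β - rateFunction A α ∈
      Icc (α * (tiltedMean A α - tiltedMean A β)) (β * (tiltedMean A α - tiltedMean A β)) := by
  have hβ : 0 ≤ β := hα.trans hαβ
  have hmeanα := summable_one_div_add_two_mul hA hsum hα
  have hmeanβ := summable_one_div_add_two_mul hA hsum hβ
  have hrate := (summable_rateTerm hA hsum hβ).sub (summable_rateTerm hA hsum hα)
  have hmul (c : ℝ) : c * (tiltedMean A α - tiltedMean A β) =
      ∑' i, c * (1 / (A i + 2 * α) - 1 / (A i + 2 * β)) := by
    rw [tiltedMean, tiltedMean, ← hmeanα.tsum_sub hmeanβ, tsum_mul_left]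
  rw [rateFunction_eq_tsum hA hsum hβ, rateFunction_eq_tsum hA hsum hα,
    ← (summable_rateTerm hA hsum hβ).tsum_sub (summable_rateTerm hA hsum hα), hmul, hmul]
  exact ⟨((hmeanα.sub hmeanβ).mul_left α).tsum_le_tsum
      (fun i => (rateTerm_sub_mem_Icc (hA i) hα hαβ).1) hrate,
    hrate.tsum_le_tsum (fun i => (rateTerm_sub_mem_Icc (hA i) hα hαβ).2)
      ((hmeanα.sub hmeanβ).mul_left β)⟩

lemma abs_rateFunction_sub_sub_le {θ₁ θ₂ : ℝ} (h₁ : 0 ≤ θ₁) (h₂ : 0 ≤ θ₂) :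
    |rateFunction A θ₁ - rateFunction A θ₂ - θ₁ * (tiltedMean A θ₂ - tiltedMean A θ₁)| ≤
      |θ₂ - θ₁| * |tiltedMean A θ₂ - tiltedMean A θ₁| := by
  rcases le_total θ₁ θ₂ with h | h
  · obtain ⟨hlow, hup⟩ := rateFunction_sub_mem_Icc hA hsum h₁ h
    have hmean := antitoneOn_tiltedMean hA hsum h₁ h₂ h
    rw [abs_of_nonneg (sub_nonneg.2 h), abs_of_nonpos (sub_nonpos.2 hmean), abs_le]
    constructor <;> nlinarith
  · obtain ⟨hlow, hup⟩ := rateFunction_sub_mem_Icc hA hsum h₂ h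
    have hmean := antitoneOn_tiltedMean hA hsum h₂ h₁ h
    rw [abs_of_nonpos (sub_nonpos.2 h), abs_of_nonneg (sub_nonneg.2 hmean), abs_le]
    constructor <;> nlinarith

lemma abs_rateFunction_sub_sub_le_of_tiltedMean_eq {θ₁ θ₂ x : ℝ} (h₁ : 0 < θ₁) (h₂ : 0 ≤ θ₂)
    (hmean : tiltedMean A θ₂ = tiltedMean A θ₁ + x * (1 / θ₁)) :
    |rateFunction A θ₁ - rateFunction A θ₂ - x| ≤ |x| * |θ₂ / θ₁ - 1| := by
  have key := abs_rateFunction_sub_sub_le hA hsum h₁.le h₂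
  rw [hmean, add_sub_cancel_left, mul_left_comm, mul_one_div_cancel h₁.ne', mul_one] at key
  refine key.trans_eq ?_
  rw [abs_mul, one_div, abs_inv, abs_of_pos h₁, div_sub_one h₁.ne', abs_div, abs_of_pos h₁]
  ring

lemma tendsto_mul_tiltedMean_sub_atTop {b c : ℝ} (hb : 0 < b) (hbc : b < c) :
    Tendsto (fun θ => θ * (tiltedMean A (b * θ) - tiltedMean A (c * θ))) atTop atTop := by
  have hc : 0 < c := hb.trans hbc
  have hL : 0 < 1 / (2 * b) - 1 / (2 * c) :=
    sub_pos.2 (one_div_lt_one_div_of_lt (by positivity) (by linarith))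
  refine (tendsto_tsum_atTop_of_tendsto hL
    (fun i => tendsto_mul_one_div_sub_one_div (A i) hb.ne' hc.ne') ?_ ?_).congr' ?_
  · filter_upwards [eventually_ge_atTop 0] with θ hθ i
    have := hA i
    exact mul_nonneg hθ (sub_nonneg.2 (one_div_le_one_div_of_le (by positivity) (by nlinarith)))
  · filter_upwards [eventually_ge_atTop 0] with θ hθ
    exact ((summable_one_div_add_two_mul hA hsum (by positivity)).sub
      (summable_one_div_add_two_mul hA hsum (by positivity))).mul_left θ
  · filter_upwards [eventually_ge_atTop 0] with θ hθ
    rw [tsum_mul_left, (summable_one_div_add_two_mul hA hsum (by positivity)).tsum_sub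
      (summable_one_div_add_two_mul hA hsum (by positivity)), tiltedMean, tiltedMean]

lemma tendsto_mul_tiltedMean_atTop : Tendsto (fun θ => θ * tiltedMean A θ) atTop atTop := by
  refine tendsto_atTop_mono' _ ?_ (tendsto_mul_tiltedMean_sub_atTop hA hsum one_pos one_lt_two)
  filter_upwards [eventually_ge_atTop 0] with θ hθ
  have := tiltedMean_pos hA hsum (by positivity : 0 ≤ 2 * θ)
  rw [one_mul]
  nlinarith

end Series

lemma tendsto_atTop_of_antitoneOn_of_apply_eq {μ ν : ℝ → ℝ} (hμ : AntitoneOn μ (Ici 0))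
    (hpos : ∀ θ, 0 ≤ θ → 0 < μ θ) (hν : ∀ᶠ s in 𝓝[>] 0, 0 < ν s ∧ μ (ν s) = s) :
    Tendsto ν (𝓝[>] 0) atTop := by
  refine tendsto_atTop.2 fun M => ?_
  have hM : 0 ≤ max M 0 := le_max_right M 0
  filter_upwards [hν, nhdsWithin_le_nhds (eventually_lt_nhds (hpos _ hM))]
    with s ⟨hνpos, hνs⟩ hs
  by_contra! h
  have := hμ hνpos.le hM (h.le.trans (le_max_left M 0))
  linarith

lemma tendsto_add_mul_one_div_nhdsGT {α : Type*} {l : Filter α} {s θ : α → ℝ}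
    (hs : Tendsto s l (𝓝 0)) (hθ : Tendsto θ l atTop)
    (hsθ : Tendsto (fun t => s t * θ t) l atTop) (x : ℝ) :
    Tendsto (fun t => s t + x * (1 / θ t)) l (𝓝[>] 0) := by
  refine tendsto_nhdsWithin_of_tendsto_nhds_of_eventually_within _ ?_ ?_
  · simpa [one_div] using hs.add (hθ.inv_tendsto_atTop.const_mul x)
  · filter_upwards [hθ.eventually_gt_atTop 0, hsθ.eventually_gt_atTop (-x)] with t hθt hst
    have : s t + x * (1 / θ t) = (s t * θ t + x) / θ t := by field_simp
    rw [mem_Ioi, this]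
    exact div_pos (by linarith) hθt

lemma tendsto_div_of_mul_abs_sub_le {α : Type*} {l : Filter α} {μ : ℝ → ℝ}
    (hμ : AntitoneOn μ (Ici 0))
    (hgap : ∀ b c, 0 < b → b < c → Tendsto (fun θ => θ * (μ (b * θ) - μ (c * θ))) atTop atTop)
    {θ₁ θ₂ : α → ℝ} (h₁ : Tendsto θ₁ l atTop) (h₂ : ∀ᶠ t in l, 0 < θ₂ t) {C : ℝ}
    (hC : ∀ᶠ t in l, θ₁ t * |μ (θ₂ t) - μ (θ₁ t)| ≤ C) :
    Tendsto (fun t => θ₂ t / θ₁ t) l (𝓝 1) := by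
  refine tendsto_order.2 ⟨fun b hb => ?_, fun c hc => ?_⟩
  · rcases le_or_gt b 0 with hb0 | hb0
    · filter_upwards [h₁.eventually_gt_atTop 0, h₂] with t ht₁ ht₂
      exact hb0.trans_lt (div_pos ht₂ ht₁)
    filter_upwards [h₁.eventually_gt_atTop 0, h₂, hC,
      ((hgap b 1 hb0 hb).comp h₁).eventually_gt_atTop C] with t ht₁ ht₂ hCt hgapt
    simp only [Function.comp, one_mul] at hgapt
    rw [lt_div_iff₀ ht₁]
    by_contra! hle
    have hmono := hμ (mem_Ici.2 ht₂.le) (mem_Ici.2 (by positivity)) hle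
    nlinarith [le_abs_self (μ (θ₂ t) - μ (θ₁ t))]
  · filter_upwards [h₁.eventually_gt_atTop 0, h₂, hC,
      ((hgap 1 c one_pos hc).comp h₁).eventually_gt_atTop C] with t ht₁ ht₂ hCt hgapt
    simp only [Function.comp, one_mul] at hgapt
    rw [div_lt_iff₀ ht₁]
    by_contra! hle
    have hmono := hμ (mem_Ici.2 (by positivity)) (mem_Ici.2 ht₂.le) hle
    nlinarith [neg_abs_le (μ (θ₂ t) - μ (θ₁ t))]

theorem exp_I_difference_tendsto_one_general (a : ℕ → ℝ) (hapos : ∀ i, 0 < a i)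
    (hasum : Summable (fun i => 1 / (a i) ^ 2))
    (μ I μInv : ℝ → ℝ)
    (hμ : ∀ θ : ℝ, μ θ = ∑' i : ℕ, 1 / ((a i) ^ 2 + 2 * θ))
    (hI : ∀ θ : ℝ, I θ =
      (1 / 2) * (∑' i : ℕ, Real.log (1 + 2 * θ / (a i) ^ 2)) - θ * μ θ)
    (hμInv : ∀ᶠ s in nhdsWithin (0 : ℝ) (Set.Ioi 0), 0 < μInv s ∧ μ (μInv s) = s) :
    ∀ x : ℝ,
      Tendsto
        (fun s => Real.exp (I (μInv s) - I (μInv (s + x * (1 / μInv s))) - x))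
        (nhdsWithin 0 (Set.Ioi 0)) (nhds 1) := by
  intro x
  obtain rfl : μ = tiltedMean fun i => a i ^ 2 := funext hμ
  obtain rfl : I = rateFunction fun i => a i ^ 2 := funext hI
  have hA : ∀ i, 0 < a i ^ 2 := fun i => pow_pos (hapos i) 2
  have hanti := antitoneOn_tiltedMean hA hasum
  have hθ₁ : Tendsto μInv (𝓝[>] 0) atTop :=
    tendsto_atTop_of_antitoneOn_of_apply_eq hanti (fun _ => tiltedMean_pos hA hasum) hμInv
  have hsθ₁ : Tendsto (fun s => s * μInv s) (𝓝[>] 0) atTop :=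
    ((tendsto_mul_tiltedMean_atTop hA hasum).comp hθ₁).congr' <| by
      filter_upwards [hμInv] with s hs
      rw [Function.comp_apply, hs.2, mul_comm]
  have hθ₂ := (tendsto_add_mul_one_div_nhdsGT (s := fun s => s)
    (tendsto_id'.2 nhdsWithin_le_nhds) hθ₁ hsθ₁ x).eventually hμInv
  have hratio : Tendsto (fun s => μInv (s + x * (1 / μInv s)) / μInv s) (𝓝[>] 0) (𝓝 1) :=
    tendsto_div_of_mul_abs_sub_le hanti (fun _ _ => tendsto_mul_tiltedMean_sub_atTop hA hasum)
      hθ₁ (hθ₂.mono fun _ hs => hs.1) (C := |x|) <| (hμInv.and hθ₂).mono fun s ⟨h₁, h₂⟩ => by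
        rw [h₁.2, h₂.2, add_sub_cancel_left, abs_mul, abs_of_pos (one_div_pos.2 h₁.1),
          mul_left_comm, mul_one_div_cancel h₁.1.ne', mul_one]
  have hD : Tendsto (fun s => rateFunction (fun i => a i ^ 2) (μInv s) -
      rateFunction (fun i => a i ^ 2) (μInv (s + x * (1 / μInv s))) - x) (𝓝[>] 0) (𝓝 0) := by
    have hbound := (hratio.sub_const 1).abs.const_mul |x|
    rw [sub_self, abs_zero, mul_zero] at hbound
    refine squeeze_zero_norm' ((hμInv.and hθ₂).mono fun s ⟨h₁, h₂⟩ => ?_) hbound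
    rw [Real.norm_eq_abs]
    exact abs_rateFunction_sub_sub_le_of_tiltedMean_eq hA hasum h₁.1 h₂.1.le (by rw [h₁.2, h₂.2])
  simpa [Function.comp_def] using (continuous_exp.tendsto 0).comp hD

/-- Let `(aᵢ)` be nondecreasing positive with `Σᵢ 1/aᵢ² < ∞`,
`μ θ = Σᵢ 1/(aᵢ²+2θ)`, `I θ = ½ Σᵢ log (1 + 2θ/aᵢ²) - θ * μ θ`, `μ⁻¹` the inverse of
`μ` (defined near `0⁺`) and `ρ s = 1/μ⁻¹ s`.  Then for every `x ∈ ℝ`,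
`exp (I (μ⁻¹ s) - I (μ⁻¹ (s + x * ρ s)) - x) → 1` as `s → 0⁺`. -/
theorem exp_I_difference_tendsto_one (a : ℕ → ℝ) (hapos : ∀ i, 0 < a i)
    (hamono : Monotone a) (hasum : Summable (fun i => 1 / (a i) ^ 2))
    (μ I μInv : ℝ → ℝ)
    (hμ : ∀ θ : ℝ, μ θ = ∑' i : ℕ, 1 / ((a i) ^ 2 + 2 * θ))
    (hI : ∀ θ : ℝ, I θ =
      (1 / 2) * (∑' i : ℕ, Real.log (1 + 2 * θ / (a i) ^ 2)) - θ * μ θ)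
    (hμInv : ∀ᶠ s in nhdsWithin (0 : ℝ) (Set.Ioi 0), 0 < μInv s ∧ μ (μInv s) = s) :
    ∀ x : ℝ,
      Tendsto
        (fun s => Real.exp (I (μInv s) - I (μInv (s + x * (1 / μInv s))) - x))
        (nhdsWithin 0 (Set.Ioi 0)) (nhds 1) :=
  exp_I_difference_tendsto_one_general a hapos hasum μ I μInv hμ hI hμInv
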